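/- The q-difference equation (z³ - 3z² - 8z - 4)·u(z/2) + (z³ + 3z² + 4z + 4)·u(z) = 0 has no nonzero rational function solution u. -/

import Mathlib

open Polynomial

/-! Writing `u = P / Q`, both cubic coefficients are monic and `P(z/2)` has leading coefficient
`lc P / 2 ^ deg P`, so comparing leading coefficients forces `2⁻¹ ^ deg P + 2⁻¹ ^ deg Q = 0`,
which is absurd for a sum of positive reals. -/

namespace Polynomial

variable {R : Type*} [CommRing R] [IsDomain R]

theorem leadingCoeff_comp_C_mul_X (p : R[X]) {a : R} (ha : a ≠ 0) :
    (p.comp (C a * X)).leadingCoeff = p.leadingCoeff * a ^ p.natDegree := by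
  rw [leadingCoeff_comp (by rw [natDegree_C_mul_X a ha]; exact one_ne_zero),
    leadingCoeff_C_mul_X]

theorem pow_natDegree_add_pow_natDegree_eq_zero {A B P Q : R[X]} {a : R} (ha : a ≠ 0)
    (hA : A ≠ 0) (hAB : A.leadingCoeff = B.leadingCoeff) (hP : P ≠ 0) (hQ : Q ≠ 0)
    (h : A * P.comp (C a * X) * Q + B * P * Q.comp (C a * X) = 0) :
    a ^ P.natDegree + a ^ Q.natDegree = 0 := by
  have hlc := congrArg leadingCoeff (eq_neg_of_add_eq_zero_left h)
  simp only [leadingCoeff_neg, leadingCoeff_mul, leadingCoeff_comp_C_mul_X _ ha, ← hAB] at hlc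
  have hne : A.leadingCoeff * P.leadingCoeff * Q.leadingCoeff ≠ 0 := by
    simp [hA, hP, hQ]
  exact mul_left_cancel₀ hne (by linear_combination hlc)

end Polynomial

theorem stmt_13 :
    ∀ P Q : Polynomial ℂ, Q ≠ 0 →
      (X ^ 3 - 3 * X ^ 2 - 8 * X - 4) * P.comp (C (1 / 2 : ℂ) * X) * Q +
        (X ^ 3 + 3 * X ^ 2 + 4 * X + 4) * P * Q.comp (C (1 / 2 : ℂ) * X) = 0 →
      P = 0 := by
  intro P Q hQ h
  by_contra hP
  have hA : (X ^ 3 - 3 * X ^ 2 - 8 * X - 4 : ℂ[X]).Monic := by monicity!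
  have hB : (X ^ 3 + 3 * X ^ 2 + 4 * X + 4 : ℂ[X]).Monic := by monicity!
  have hsum := pow_natDegree_add_pow_natDegree_eq_zero (by norm_num) hA.ne_zero
    (hA.leadingCoeff.trans hB.leadingCoeff.symm) hP hQ h
  have hpos : (0 : ℝ) < (1 / 2) ^ P.natDegree + (1 / 2) ^ Q.natDegree := by positivity
  exact hpos.ne' (Complex.ofReal_eq_zero.mp (by push_cast; exact hsum))
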